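/- A distance space X is injective (meaning: for every isometry i : X → Y into a distance space Y there is a non-expanding r : Y → X with r ∘ i = id_X) if and only if there exists a non-expanding map r : EX → X such that r ∘ e_X is the identity of X, where e_X : X → EX is the canonical isometric embedding into the injective envelope. -/

import Mathlib

/-!
The envelope `EX` is hyperconvex: a family of extremal functions `hᵢ` with pairwise distances at
most `ρᵢ + ρⱼ` is met by any extremal function below `x ↦ ⨅ᵢ hᵢ x + ρᵢ`, which lies in `Δ(X)` and
therefore dominates one (Zorn). Hyperconvex targets admit one-point extensions of non-expanding
maps, hence by Zorn every non-expanding map into `EX` extends along any isometry. So if `r`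
retracts `EX` onto `X`, a retraction `Y → X` for an isometry `i : X → Y` is `r` composed with the
extension of `e_X` along `i`; conversely, injectivity applied to `e_X` itself yields `r`.
-/

open scoped ENNReal

universe u

structure DistSpace (X : Type u) where
  d : X → X → ℝ≥0∞
  refl : ∀ x, d x x = 0
  symm : ∀ x y, d x y = d y x
  triangle : ∀ x y z, d x z ≤ d x y + d y z

def Delta {X : Type u} (D : DistSpace X) : Set (X → ℝ≥0∞) :=
  {f | ∀ x y, D.d x y ≤ f x + f y}

def Extremal {X : Type u} (D : DistSpace X) (f : X → ℝ≥0∞) : Prop :=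
  f ∈ Delta D ∧ ∀ g ∈ Delta D, g ≤ f → g = f

noncomputable def supDist {X : Type u} (f g : X → ℝ≥0∞) : ℝ≥0∞ :=
  ⨆ x, (f x - g x) ⊔ (g x - f x)

theorem extremal_ddist {X : Type u} (D : DistSpace X) (x : X) :
    Extremal D (fun z => D.d x z) := by
  constructor
  · intro y z
    calc D.d y z ≤ D.d y x + D.d x z := D.triangle y x z
    _ = D.d x y + D.d x z := by rw [D.symm y x]
  · intro g hg hle
    funext z
    have hx : g x = 0 := le_antisymm (by simpa [D.refl] using hle x) zero_le
    have h1 : D.d x z ≤ g z := by simpa [hx] using hg x z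
    exact le_antisymm (hle z) h1

/-- The injective envelope `EX` of a distance space `X`: the set of extremal
functions, with the sup-distance. -/
def EnvType {X : Type u} (D : DistSpace X) : Type u :=
  {f : X → ℝ≥0∞ // Extremal D f}

/-- The canonical isometric embedding `e_X : X → EX`, `x ↦ d_X(x,·)`. -/
noncomputable def eEnv {X : Type u} (D : DistSpace X) (x : X) : EnvType D :=
  ⟨fun z => D.d x z, extremal_ddist D x⟩

open Set

namespace DistSpace

variable {X : Type*} {Y Z : Type u}

def Hyperconvex (DZ : DistSpace Z) : Prop :=
  ∀ (ι : Type u) (c : ι → Z) (ρ : ι → ℝ≥0∞), (∀ i j, DZ.d (c i) (c j) ≤ ρ i + ρ j) →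
    ∃ z, ∀ i, DZ.d z (c i) ≤ ρ i

def IsNonexpandingRel (DY : DistSpace Y) (DZ : DistSpace Z) (R : Set (Y × Z)) : Prop :=
  ∀ p ∈ R, ∀ q ∈ R, DZ.d p.2 q.2 ≤ DY.d p.1 q.1

variable {DY : DistSpace Y} {DZ : DistSpace Z}

lemma isNonexpandingRel_sUnion {c : Set (Set (Y × Z))} (hc : ∀ R ∈ c, IsNonexpandingRel DY DZ R)
    (hchain : IsChain (· ⊆ ·) c) : IsNonexpandingRel DY DZ (⋃₀ c) := by
  rintro p ⟨R, hR, hpR⟩ q ⟨S, hS, hqS⟩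
  rcases hchain.total hR hS with hRS | hSR
  · exact hc S hS p (hRS hpR) q hqS
  · exact hc R hR p hpR q (hSR hqS)

lemma Hyperconvex.exists_isNonexpandingRel_insert (hZ : DZ.Hyperconvex) {R : Set (Y × Z)}
    (hR : IsNonexpandingRel DY DZ R) (y : Y) : ∃ z, IsNonexpandingRel DY DZ (insert (y, z) R) := by
  obtain ⟨z, hz⟩ := hZ R (fun p => p.1.2) (fun p => DY.d y p.1.1) fun p q =>
    calc DZ.d p.1.2 q.1.2 ≤ DY.d p.1.1 q.1.1 := hR _ p.2 _ q.2
      _ ≤ DY.d p.1.1 y + DY.d y q.1.1 := DY.triangle _ _ _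
      _ = DY.d y p.1.1 + DY.d y q.1.1 := by rw [DY.symm]
  refine ⟨z, ?_⟩
  rintro p (rfl | hp) q (rfl | hq)
  · simp only [DZ.refl, zero_le]
  · exact hz ⟨q, hq⟩
  · rw [DZ.symm, DY.symm]
    exact hz ⟨p, hp⟩
  · exact hR p hp q hq

lemma Hyperconvex.exists_total_isNonexpandingRel (hZ : DZ.Hyperconvex) {R : Set (Y × Z)}
    (hR : IsNonexpandingRel DY DZ R) :
    ∃ M, R ⊆ M ∧ IsNonexpandingRel DY DZ M ∧ ∀ y, ∃ z, (y, z) ∈ M := by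
  obtain ⟨M, hRM, hM, hMmax⟩ := zorn_subset_nonempty {S | IsNonexpandingRel DY DZ S}
    (fun c hc hchain _ => ⟨⋃₀ c, isNonexpandingRel_sUnion hc hchain,
      fun _ => subset_sUnion_of_mem⟩) R hR
  refine ⟨M, hRM, hM, fun y => ?_⟩
  obtain ⟨z, hz⟩ := hZ.exists_isNonexpandingRel_insert hM y
  exact ⟨z, hMmax hz (subset_insert _ _) (mem_insert _ _)⟩

lemma Hyperconvex.exists_extension (hZ : DZ.Hyperconvex) (hsep : ∀ z w, DZ.d z w = 0 → z = w)
    (i : X → Y) (φ : X → Z) (hφ : ∀ a b, DZ.d (φ a) (φ b) ≤ DY.d (i a) (i b)) :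
    ∃ ψ : Y → Z, (∀ a b, DZ.d (ψ a) (ψ b) ≤ DY.d a b) ∧ ∀ x, ψ (i x) = φ x := by
  obtain ⟨M, hgraph, hM, htotal⟩ :=
    hZ.exists_total_isNonexpandingRel (R := range fun x => (i x, φ x))
      (by rintro _ ⟨a, rfl⟩ _ ⟨b, rfl⟩; exact hφ a b)
  choose ψ hψ using htotal
  refine ⟨ψ, fun a b => hM _ (hψ a) _ (hψ b), fun x => hsep _ _ ?_⟩
  simpa only [DY.refl, nonpos_iff_eq_zero] using hM _ (hψ (i x)) _ (hgraph ⟨x, rfl⟩)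

end DistSpace

section SupDist

variable {X : Type*}

lemma le_add_supDist (f g : X → ℝ≥0∞) (x : X) : f x ≤ g x + supDist f g :=
  calc f x ≤ f x - g x + g x := le_tsub_add
    _ ≤ supDist f g + g x := by gcongr; exact le_iSup_of_le x le_sup_left
    _ = g x + supDist f g := add_comm _ _

lemma supDist_le {f g : X → ℝ≥0∞} {c : ℝ≥0∞} (h : ∀ x, f x ≤ g x + c)
    (h' : ∀ x, g x ≤ f x + c) : supDist f g ≤ c :=
  iSup_le fun x => sup_le (tsub_le_iff_left.2 (h x)) (tsub_le_iff_left.2 (h' x))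

lemma supDist_self (f : X → ℝ≥0∞) : supDist f f = 0 := by
  simp [supDist]

lemma supDist_comm (f g : X → ℝ≥0∞) : supDist f g = supDist g f := by
  simp [supDist, sup_comm]

lemma supDist_triangle (f g h : X → ℝ≥0∞) :
    supDist f h ≤ supDist f g + supDist g h := by
  refine supDist_le (fun x => ?_) (fun x => ?_)
  · calc f x ≤ g x + supDist f g := le_add_supDist f g x
      _ ≤ h x + supDist g h + supDist f g := by gcongr; exact le_add_supDist g h x
      _ = h x + (supDist f g + supDist g h) := by ring
  · calc h x ≤ g x + supDist h g := le_add_supDist h g x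
      _ ≤ f x + supDist g f + supDist h g := by gcongr; exact le_add_supDist g f x
      _ = f x + (supDist f g + supDist g h) := by
        rw [supDist_comm g f, supDist_comm h g]; ring

lemma eq_of_supDist_eq_zero {f g : X → ℝ≥0∞} (h : supDist f g = 0) : f = g := by
  funext x
  apply le_antisymm
  · simpa [h] using le_add_supDist f g x
  · simpa [supDist_comm g f, h] using le_add_supDist g f x

end SupDist

section Envelope

variable {X : Type u} {D : DistSpace X}

lemma sInf_mem_Delta {c : Set (X → ℝ≥0∞)} (hc : c ⊆ Delta D) (hchain : IsChain (· ≤ ·) c) :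
    sInf c ∈ Delta D := by
  intro x y
  simp only [sInf_apply]
  refine ENNReal.le_iInf_add_iInf fun f g => ?_
  rcases hchain.total f.2 g.2 with hfg | hgf
  · exact (hc f.2 x y).trans (by gcongr; exact hfg y)
  · exact (hc g.2 x y).trans (by gcongr; exact hgf x)

lemma exists_extremal_le {f : X → ℝ≥0∞} (hf : f ∈ Delta D) : ∃ g, Extremal D g ∧ g ≤ f := by
  -- In the order dual, `sSup c` is the pointwise infimum of `c`.
  obtain ⟨m, hmf, hm, hmax⟩ := zorn_le_nonempty₀ (α := (X → ℝ≥0∞)ᵒᵈ) (Delta D)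
    (fun c hc hchain _ _ => ⟨sSup c, sInf_mem_Delta hc hchain.symm, fun _ => le_sSup⟩) f hf
  exact ⟨m, ⟨hm, fun g hg hgm => le_antisymm hgm (hmax hg hgm)⟩, hmf⟩

lemma Extremal.le_of_forall_le_add {f : X → ℝ≥0∞} (hf : Extremal D f) {x : X} {b : ℝ≥0∞}
    (hb : ∀ y, D.d x y ≤ b + f y) : f x ≤ b := by
  classical
  -- Lowering `f` at `x` to `b ⊓ f x` stays in `Delta D`, so minimality forbids a strict drop.
  set g := Function.update f x (b ⊓ f x)
  have hgx : ∀ y, D.d x y ≤ b ⊓ f x + f y := fun y => by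
    rcases le_total b (f x) with h | h
    · simpa [inf_eq_left.2 h] using hb y
    · simpa [inf_eq_right.2 h] using hf.1 x y
  have hgD : g ∈ Delta D := by
    intro y z
    by_cases hy : y = x <;> by_cases hz : z = x
    · simp [hy, hz, D.refl]
    · simpa [g, hy, hz] using hgx z
    · simpa [g, hy, hz, D.symm y x, add_comm] using hgx y
    · simpa [g, hy, hz] using hf.1 y z
  have hgf : g ≤ f := update_le_self_iff.2 inf_le_right
  have := congrFun (hf.2 g hgD hgf) x
  simp only [g, Function.update_self] at this
  exact inf_eq_right.1 this

lemma Extremal.supDist_ddist {f : X → ℝ≥0∞} (hf : Extremal D f) (x : X) :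
    supDist f (D.d x ·) = f x := by
  refine le_antisymm (supDist_le (fun z => ?_) (fun z => ?_)) ?_
  · refine hf.le_of_forall_le_add fun y => ?_
    calc D.d z y ≤ D.d z x + D.d x y := D.triangle z x y
      _ ≤ D.d z x + (f x + f y) := by gcongr; exact hf.1 x y
      _ = D.d x z + f x + f y := by rw [D.symm z x]; ring
  · rw [add_comm]
    exact hf.1 x z
  · simpa [D.refl] using le_add_supDist f (D.d x ·) x

lemma supDist_ddist (x y : X) : supDist (D.d x ·) (D.d y ·) = D.d x y :=
  (extremal_ddist D x).supDist_ddist y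

lemma exists_extremal_supDist_le {ι : Sort*} (h : ι → X → ℝ≥0∞) (hh : ∀ i, Extremal D (h i))
    (ρ : ι → ℝ≥0∞) (hρ : ∀ i j, supDist (h i) (h j) ≤ ρ i + ρ j) :
    ∃ g, Extremal D g ∧ ∀ i, supDist g (h i) ≤ ρ i := by
  have hF : (fun x => ⨅ i, h i x + ρ i) ∈ Delta D := fun x y =>
    ENNReal.le_iInf_add_iInf fun i j =>
      calc D.d x y ≤ h j x + h j y := (hh j).1 x y
        _ ≤ h i x + supDist (h j) (h i) + h j y := by gcongr; exact le_add_supDist _ _ x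
        _ ≤ h i x + (ρ j + ρ i) + h j y := by gcongr; exact hρ j i
        _ = h i x + ρ i + (h j y + ρ j) := by ring
  obtain ⟨g, hg, hgF⟩ := exists_extremal_le hF
  have hgh : ∀ i x, g x ≤ h i x + ρ i := fun i x => (hgF x).trans (iInf_le _ i)
  refine ⟨g, hg, fun i => supDist_le (hgh i) fun x => ?_⟩
  refine (hh i).le_of_forall_le_add fun y => ?_
  calc D.d x y ≤ g x + g y := hg.1 x y
    _ ≤ g x + (h i y + ρ i) := by gcongr; exact hgh i y
    _ = g x + ρ i + h i y := by ring

variable (D)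

noncomputable def envDist : DistSpace (EnvType D) where
  d f g := supDist f.1 g.1
  refl f := supDist_self f.1
  symm f g := supDist_comm f.1 g.1
  triangle f g h := supDist_triangle f.1 g.1 h.1

lemma envDist_eEnv (x y : X) : (envDist D).d (eEnv D x) (eEnv D y) = D.d x y :=
  supDist_ddist x y

lemma eq_of_envDist_eq_zero (f g : EnvType D) (h : (envDist D).d f g = 0) : f = g :=
  Subtype.ext (eq_of_supDist_eq_zero h)

lemma envDist_hyperconvex : (envDist D).Hyperconvex := fun _ c ρ hρ =>
  let ⟨g, hg, hgc⟩ := exists_extremal_supDist_le (fun i => (c i).1) (fun i => (c i).2) ρ hρ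
  ⟨⟨g, hg⟩, hgc⟩

end Envelope

/-- A distance space `X` is injective iff there is a non-expanding retraction
`r : EX → X` with `r ∘ e_X = id_X`. -/
theorem stmt7 {X : Type u} (D : DistSpace X) :
    (∀ (Y : Type u) (DY : DistSpace Y) (i : X → Y),
        (∀ a b, DY.d (i a) (i b) = D.d a b) →
        ∃ r : Y → X, (∀ a b, D.d (r a) (r b) ≤ DY.d a b) ∧ ∀ x, r (i x) = x) ↔
    (∃ r : EnvType D → X,
        (∀ f g : EnvType D, D.d (r f) (r g) ≤ supDist f.1 g.1) ∧
        ∀ x, r (eEnv D x) = x) := by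
  constructor
  · intro hinj
    exact hinj _ (envDist D) (eEnv D) (envDist_eEnv D)
  · rintro ⟨r, hr, hre⟩ Y DY i hi
    obtain ⟨s, hs, hsi⟩ := (envDist_hyperconvex D).exists_extension (eq_of_envDist_eq_zero D) i
      (eEnv D) fun a b => by rw [hi, envDist_eEnv]
    exact ⟨r ∘ s, fun a b => (hr _ _).trans (hs a b), fun x => by simp [hsi, hre]⟩
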